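/- Let τ > 0, α = 1, and suppose λ is a real number with λ ≤ -1 (playing the role of the minimum eigenvalue of the adjacency matrix). If τ < (1/(-λ-1))^{1/2} · exp(1/(2(-λ-1))) (interpreting the bound as +∞ when λ = -1), then for every y ≥ 0 the best-response derivative satisfies 1/λ < φ'(y) < 0, where φ(y) = (1/τ)·W(τ²e^{-τy}). Equivalently, the network normality condition W(τ²) < 1/(-λ-1) holds. -/

import Mathlib

/-- The Lambert W function on `[0,∞)`: the inverse of `x ↦ x * exp x` on `[0,∞)`. -/
noncomputable def lambertW (x : ℝ) : ℝ :=
  Function.invFunOn (fun t => t * Real.exp t) (Set.Ici 0) x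

/-!
Since `t ↦ t eᵗ` is increasing on `[0,∞)`, `W(x) < ε ↔ x < ε e^ε`, and the hypothesis on `τ` is
exactly `τ² < ε e^ε` for `ε = 1/(-λ-1)`. As `τ² e^{-τy} ≤ τ²` and `W` is monotone, `w = W(τ² e^{-τy})`
satisfies `w (-λ-1) < 1`, which rearranges to `1/λ < -w/(1+w)`.
-/

open Real Set

section LambertW

variable {x y t ε : ℝ}

theorem strictMonoOn_mul_exp : StrictMonoOn (fun t : ℝ => t * exp t) (Ici 0) :=
  fun a ha _ _ hab => mul_lt_mul hab (exp_le_exp.2 hab.le) (exp_pos a) (le_trans ha hab.le)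

theorem exists_mul_exp_eq (hx : 0 ≤ x) : ∃ t ∈ Ici (0 : ℝ), t * exp t = x := by
  have hmem : x ∈ Icc (0 * exp 0) (x * exp x) :=
    ⟨by simpa using hx, le_mul_of_one_le_right hx (one_le_exp hx)⟩
  obtain ⟨t, ht, htx⟩ :=
    intermediate_value_Icc hx (continuous_id.mul continuous_exp).continuousOn hmem
  exact ⟨t, ht.1, htx⟩

theorem lambertW_nonneg (hx : 0 ≤ x) : 0 ≤ lambertW x :=
  Function.invFunOn_mem (exists_mul_exp_eq hx)

theorem lambertW_mul_exp_lambertW (hx : 0 ≤ x) : lambertW x * exp (lambertW x) = x :=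
  Function.invFunOn_eq (exists_mul_exp_eq hx)

theorem lambertW_mul_exp (ht : 0 ≤ t) : lambertW (t * exp t) = t :=
  have hx : 0 ≤ t * exp t := mul_nonneg ht (exp_pos t).le
  strictMonoOn_mul_exp.injOn (lambertW_nonneg hx) ht (lambertW_mul_exp_lambertW hx)

theorem lambertW_lt_lambertW_iff (hx : 0 ≤ x) (hy : 0 ≤ y) :
    lambertW x < lambertW y ↔ x < y := by
  rw [← strictMonoOn_mul_exp.lt_iff_lt (lambertW_nonneg hx) (lambertW_nonneg hy)]
  simp only [lambertW_mul_exp_lambertW hx, lambertW_mul_exp_lambertW hy]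

theorem lambertW_le_lambertW (hx : 0 ≤ x) (hxy : x ≤ y) : lambertW x ≤ lambertW y :=
  not_lt.1 fun h => hxy.not_gt ((lambertW_lt_lambertW_iff (hx.trans hxy) hx).1 h)

theorem lambertW_pos (hx : 0 < x) : 0 < lambertW x := by
  have hW0 : lambertW 0 = 0 := by simpa using lambertW_mul_exp (le_refl (0 : ℝ))
  simpa [hW0] using (lambertW_lt_lambertW_iff le_rfl hx.le).2 hx

theorem lambertW_lt_iff (hx : 0 ≤ x) (hε : 0 ≤ ε) : lambertW x < ε ↔ x < ε * exp ε := by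
  rw [← lambertW_lt_lambertW_iff hx (mul_nonneg hε (exp_pos ε).le), lambertW_mul_exp hε]

end LambertW

theorem lambertW_sq_lt {τ ε : ℝ} (hτ : 0 ≤ τ) (hε : 0 ≤ ε)
    (h : τ < ε ^ ((1 : ℝ) / 2) * exp (ε / 2)) : lambertW (τ ^ 2) < ε := by
  rw [← sqrt_eq_rpow, exp_half, ← sqrt_mul hε, lt_sqrt hτ] at h
  exact (lambertW_lt_iff (sq_nonneg τ) hε).2 h

theorem one_div_lt_neg_div_one_add {lam w : ℝ} (hlam : lam < 0) (hw : 0 ≤ w)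
    (h : w * (-lam - 1) < 1) : 1 / lam < -(w / (1 + w)) := by
  rw [div_lt_iff_of_neg hlam, neg_mul, div_mul_eq_mul_div, ← neg_div, div_lt_one (by linarith)]
  linarith

/-- For τ > 0, α = 1, and λ ≤ -1 (the minimum adjacency eigenvalue), if
`τ < (1/(-λ-1))^(1/2) · exp(1/(2(-λ-1)))` (the bound being +∞ when λ = -1), then
`1/λ < φ'(y) < 0` for every `y ≥ 0`, where
`φ'(y) = -W(τ²e^{-τy})/(1+W(τ²e^{-τy}))`; equivalently the network normality condition
`W(τ²) < 1/(-λ-1)` holds (when λ < -1). -/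
theorem network_normality_condition (τ lam : ℝ) (hτ : 0 < τ) (hlam : lam ≤ -1)
    (hbound : lam = -1 ∨
      τ < (1 / (-lam - 1)) ^ ((1 : ℝ) / 2) * Real.exp (1 / (2 * (-lam - 1)))) :
    (∀ y : ℝ, 0 ≤ y →
      1 / lam < -(lambertW (τ ^ 2 * Real.exp (-τ * y)) /
          (1 + lambertW (τ ^ 2 * Real.exp (-τ * y)))) ∧
      -(lambertW (τ ^ 2 * Real.exp (-τ * y)) /
          (1 + lambertW (τ ^ 2 * Real.exp (-τ * y)))) < 0) ∧
    (lam < -1 → lambertW (τ ^ 2) < 1 / (-lam - 1)) := by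
  have hnormal : lam < -1 → lambertW (τ ^ 2) < 1 / (-lam - 1) := fun hl => by
    refine lambertW_sq_lt hτ.le (one_div_nonneg.2 (by linarith)) ?_
    rcases hbound with rfl | h
    · exact absurd hl (lt_irrefl _)
    · rwa [show 1 / (2 * (-lam - 1)) = 1 / (-lam - 1) / 2 by rw [div_div, mul_comm]] at h
  refine ⟨fun y hy => ?_, hnormal⟩
  set x := τ ^ 2 * exp (-τ * y)
  have hx : 0 < x := by positivity
  have hxτ : x ≤ τ ^ 2 := mul_le_of_le_one_right (sq_nonneg τ) (exp_le_one_iff.2 (by nlinarith))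
  have hw : lambertW x * (-lam - 1) < 1 := by
    rcases hlam.lt_or_eq with hl | rfl
    · have := (lambertW_le_lambertW hx.le hxτ).trans_lt (hnormal hl)
      rwa [lt_div_iff₀ (by linarith)] at this
    · norm_num
  have hW := lambertW_pos hx
  exact ⟨one_div_lt_neg_div_one_add (by linarith) hW.le hw,
    neg_neg_of_pos (div_pos hW (by linarith))⟩
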